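/- arXiv:2210.00898 — 5 statements merged into one kernel-verified Lean document; each statement's English description precedes it below -/
import Mathlib

section
/- Let X be a nonempty finite set, f : X → ℝ, c : X × X → [0, ∞) with min_{y ∈ X} c(x,y) = 0 for all x ∈ X, ε > 0, q ∈ ℕ with q ≥ 1, and let P̂ be a probability measure on X. Define G(λ) := E_{P̂}[ −(−f)^{λc} ] − ε^q·λ for λ ≥ 0, where (−f)^{λc}(x) = max_{y ∈ X}(−f(y) − λ·c(x,y)). Then there exists λ* ∈ [0, ∞) attaining sup_{λ ≥ 0} G(λ). -/
open Finset

/-- Existence of an optimal dual multiplier λ* attaining the supremum of the dual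
objective `G(λ) = E_{P̂}[-(-f)^{λc}] - ε^q λ` over `λ ≥ 0`. -/
theorem exists_optimal_lambda
    {X : Type*} [Fintype X] [Nonempty X]
    (f : X → ℝ) (c : X → X → ℝ) (hc : ∀ x y, 0 ≤ c x y)
    (hcmin : ∀ x, (univ.inf' univ_nonempty fun y => c x y) = 0)
    (ε : ℝ) (hε : 0 < ε) (q : ℕ) (hq : 1 ≤ q)
    (p : X → ℝ) (hp : ∀ x, 0 ≤ p x) (hp1 : ∑ x, p x = 1)
    (G : ℝ → ℝ)
    (hG : ∀ l, G l =
      (∑ x, p x * (-(univ.sup' univ_nonempty fun y => -f y - l * c x y))) - ε ^ q * l) :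
    ∃ l0 : ℝ, 0 ≤ l0 ∧ ∀ l : ℝ, 0 ≤ l → G l ≤ G l0 := by
  have hεq : 0 < ε ^ q := pow_pos hε q
  -- choose y with c x y = 0
  have hy : ∀ x : X, ∃ y : X, c x y = 0 := by
    intro x
    obtain ⟨y, -, hy⟩ := Finset.exists_mem_eq_inf' (univ_nonempty) (fun y => c x y)
    exact ⟨y, by rw [← hy, hcmin x]⟩
  choose yx hyx using hy
  set C : ℝ := ∑ x, p x * f (yx x) with hC
  -- upper bound G l ≤ C - ε^q l
  have hbound : ∀ l : ℝ, G l ≤ C - ε ^ q * l := by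
    intro l
    rw [hG]
    have : (∑ x, p x * (-(univ.sup' univ_nonempty fun y => -f y - l * c x y))) ≤ C := by
      apply Finset.sum_le_sum
      intro x _
      apply mul_le_mul_of_nonneg_left _ (hp x)
      have hle : -f (yx x) - l * c x (yx x) ≤
          univ.sup' univ_nonempty fun y => -f y - l * c x y :=
        Finset.le_sup' (fun y => -f y - l * c x y) (mem_univ (yx x))
      rw [hyx x, mul_zero, sub_zero] at hle
      linarith
    linarith
  -- continuity of G
  have hcont : Continuous G := by
    have h1 : Continuous fun l : ℝ =>
        (∑ x, p x * (-(univ.sup' univ_nonempty fun y => -f y - l * c x y))) - ε ^ q * l := by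
      apply Continuous.sub _ (continuous_const.mul continuous_id)
      apply continuous_finset_sum
      intro x _
      apply continuous_const.mul
      apply Continuous.neg
      exact Continuous.finset_sup'_apply univ_nonempty fun y _ =>
        continuous_const.sub (continuous_id.mul continuous_const)
    have : G = fun l =>
        (∑ x, p x * (-(univ.sup' univ_nonempty fun y => -f y - l * c x y))) - ε ^ q * l :=
      funext hG
    rw [this]; exact h1
  -- compact interval [0, M]
  set M : ℝ := max 0 ((C - G 0) / ε ^ q) with hM
  have hM0 : 0 ≤ M := le_max_left _ _
  obtain ⟨l0, hl0mem, hl0max⟩ :=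
    (isCompact_Icc (a := (0:ℝ)) (b := M)).exists_isMaxOn
      (Set.nonempty_Icc.2 hM0) hcont.continuousOn
  refine ⟨l0, hl0mem.1, fun l hl => ?_⟩
  by_cases hlM : l ≤ M
  · exact hl0max ⟨hl, hlM⟩
  · push_neg at hlM
    have h1 : G l ≤ C - ε ^ q * l := hbound l
    have h2 : G 0 ≤ G l0 := hl0max ⟨le_refl 0, hM0⟩
    have h3 : (C - G 0) / ε ^ q ≤ M := le_max_right _ _
    have h4 : C - G 0 ≤ ε ^ q * M := by
      rw [div_le_iff₀ hεq] at h3; linarith [h3]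
    nlinarith [hεq, hlM]
end

section
/- Let X be a finite subset of ℝ^d, A a finite set of actions, r : X × A × X → ℝ a reward function, α ∈ (0,1), and for each (x,a) ∈ X × A let P(x,a) be a nonempty set of probability measures on X. Define the operator H on functions q : X × A → ℝ by (Hq)(x,a) := inf_{P ∈ P(x,a)} E_P[ r(x,a,X₁) + α·max_{b ∈ A} q(X₁,b) ]. Then H is a contraction with respect to the supremum norm with contraction constant α: for all q₁, q₂ : X × A → ℝ, ‖Hq₁ − Hq₂‖_∞ ≤ α‖q₁ − q₂‖_∞. -/
open Finset

private lemma sInf_img_le_sInf_img {α : Type*} {S : Set α} (hS : S.Nonempty)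
    (f g : α → ℝ) (c : ℝ)
    (hbdd : BddBelow (f '' S))
    (h : ∀ p ∈ S, f p ≤ g p + c) :
    sInf (f '' S) ≤ sInf (g '' S) + c := by
  rw [← sub_le_iff_le_add]
  apply le_csInf (hS.image g)
  rintro _ ⟨p, hp, rfl⟩
  have h1 : sInf (f '' S) ≤ f p := csInf_le hbdd ⟨p, hp, rfl⟩
  linarith [h p hp]

/-- The robust Bellman operator `H` on Q-functions is an `α`-contraction in the
supremum norm. -/
theorem robust_H_contraction
    {X A : Type*} [Fintype X] [Fintype A] [Nonempty X] [Nonempty A]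
    (r : X → A → X → ℝ) (α : ℝ) (hα : 0 < α) (hα1 : α < 1)
    (P : X → A → Set (X → ℝ))
    (hPne : ∀ x a, (P x a).Nonempty)
    (hPprob : ∀ x a, ∀ p ∈ P x a, (∀ y, 0 ≤ p y) ∧ ∑ y, p y = 1)
    (H : (X → A → ℝ) → (X → A → ℝ))
    (hH : ∀ Q x a, H Q x a =
      sInf ((fun p : X → ℝ =>
        ∑ y, p y * (r x a y + α * (univ.sup' univ_nonempty fun b => Q y b))) '' P x a))
    (Q₁ Q₂ : X → A → ℝ) :
    (univ.sup' univ_nonempty fun xa : X × A => |H Q₁ xa.1 xa.2 - H Q₂ xa.1 xa.2|) ≤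
      α * univ.sup' univ_nonempty fun xa : X × A => |Q₁ xa.1 xa.2 - Q₂ xa.1 xa.2| := by
  set D := univ.sup' univ_nonempty fun xa : X × A => |Q₁ xa.1 xa.2 - Q₂ xa.1 xa.2| with hD
  -- sup of max-functions difference bounded by D
  have hM : ∀ y : X,
      |(univ.sup' univ_nonempty fun b => Q₁ y b) -
        (univ.sup' univ_nonempty fun b => Q₂ y b)| ≤ D := by
    intro y
    rw [abs_sub_le_iff]
    constructor
    · rw [sub_le_iff_le_add]
      apply Finset.sup'_le
      intro b _
      have h1 : Q₂ y b ≤ univ.sup' univ_nonempty fun b => Q₂ y b :=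
        Finset.le_sup' _ (mem_univ b)
      have h2 : |Q₁ y b - Q₂ y b| ≤ D :=
        Finset.le_sup' (f := fun xa : X × A => |Q₁ xa.1 xa.2 - Q₂ xa.1 xa.2|)
          (mem_univ (y, b))
      have := abs_le.mp h2
      linarith [this.1, this.2]
    · rw [sub_le_iff_le_add]
      apply Finset.sup'_le
      intro b _
      have h1 : Q₁ y b ≤ univ.sup' univ_nonempty fun b => Q₁ y b :=
        Finset.le_sup' _ (mem_univ b)
      have h2 : |Q₁ y b - Q₂ y b| ≤ D :=
        Finset.le_sup' (f := fun xa : X × A => |Q₁ xa.1 xa.2 - Q₂ xa.1 xa.2|)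
          (mem_univ (y, b))
      have := abs_le.mp h2
      linarith [this.1, this.2]
  apply Finset.sup'_le
  rintro ⟨x, a⟩ -
  simp only
  set f₁ := fun p : X → ℝ =>
    ∑ y, p y * (r x a y + α * (univ.sup' univ_nonempty fun b => Q₁ y b)) with hf₁
  set f₂ := fun p : X → ℝ =>
    ∑ y, p y * (r x a y + α * (univ.sup' univ_nonempty fun b => Q₂ y b)) with hf₂
  -- pointwise bound
  have key : ∀ p ∈ P x a, |f₁ p - f₂ p| ≤ α * D := by
    intro p hp
    obtain ⟨hpos, hsum⟩ := hPprob x a p hp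
    have : f₁ p - f₂ p = ∑ y, p y * (α *
        ((univ.sup' univ_nonempty fun b => Q₁ y b) -
         (univ.sup' univ_nonempty fun b => Q₂ y b))) := by
      rw [hf₁, hf₂, ← Finset.sum_sub_distrib]
      congr 1; ext y; ring
    rw [this]
    calc |∑ y, p y * (α * ((univ.sup' univ_nonempty fun b => Q₁ y b) -
            (univ.sup' univ_nonempty fun b => Q₂ y b)))|
        ≤ ∑ y, |p y * (α * ((univ.sup' univ_nonempty fun b => Q₁ y b) -
            (univ.sup' univ_nonempty fun b => Q₂ y b)))| := Finset.abs_sum_le_sum_abs _ _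
      _ ≤ ∑ y : X, p y * (α * D) := by
          apply Finset.sum_le_sum
          intro y _
          rw [abs_mul, abs_mul, abs_of_nonneg (hpos y), abs_of_nonneg hα.le]
          exact mul_le_mul_of_nonneg_left
            (mul_le_mul_of_nonneg_left (hM y) hα.le) (hpos y)
      _ = α * D := by rw [← Finset.sum_mul, hsum, one_mul]
  -- bdd below
  have bdd1 : BddBelow (f₁ '' P x a) := by
    refine ⟨univ.inf' univ_nonempty fun y =>
      (r x a y + α * (univ.sup' univ_nonempty fun b => Q₁ y b)) ⊓ 0, ?_⟩
    rintro _ ⟨p, hp, rfl⟩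
    obtain ⟨hpos, hsum⟩ := hPprob x a p hp
    set m := univ.inf' univ_nonempty fun y =>
      (r x a y + α * (univ.sup' univ_nonempty fun b => Q₁ y b)) ⊓ 0 with hm
    calc m = m * ∑ y, p y := by rw [hsum, mul_one]
      _ = ∑ y, m * p y := by rw [Finset.mul_sum]
      _ ≤ f₁ p := by
          apply Finset.sum_le_sum
          intro y _
          have hmle : m ≤ r x a y + α * (univ.sup' univ_nonempty fun b => Q₁ y b) :=
            le_trans (Finset.inf'_le _ (mem_univ y)) inf_le_left
          rw [mul_comm]
          exact mul_le_mul_of_nonneg_left hmle (hpos y)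
  have bdd2 : BddBelow (f₂ '' P x a) := by
    refine ⟨univ.inf' univ_nonempty fun y =>
      (r x a y + α * (univ.sup' univ_nonempty fun b => Q₂ y b)) ⊓ 0, ?_⟩
    rintro _ ⟨p, hp, rfl⟩
    obtain ⟨hpos, hsum⟩ := hPprob x a p hp
    set m := univ.inf' univ_nonempty fun y =>
      (r x a y + α * (univ.sup' univ_nonempty fun b => Q₂ y b)) ⊓ 0 with hm
    calc m = m * ∑ y, p y := by rw [hsum, mul_one]
      _ = ∑ y, m * p y := by rw [Finset.mul_sum]
      _ ≤ f₂ p := by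
          apply Finset.sum_le_sum
          intro y _
          have hmle : m ≤ r x a y + α * (univ.sup' univ_nonempty fun b => Q₂ y b) :=
            le_trans (Finset.inf'_le _ (mem_univ y)) inf_le_left
          rw [mul_comm]
          exact mul_le_mul_of_nonneg_left hmle (hpos y)
  rw [hH Q₁ x a, hH Q₂ x a]
  rw [abs_sub_le_iff]
  constructor
  · have := sInf_img_le_sInf_img (hPne x a) f₁ f₂ (α * D) bdd1
      (fun p hp => by linarith [(abs_le.mp (key p hp)).2])
    linarith
  · have := sInf_img_le_sInf_img (hPne x a) f₂ f₁ (α * D) bdd2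
      (fun p hp => by linarith [(abs_le.mp (key p hp)).1])
    linarith
end

section
/- Let X and A be nonempty finite sets, r : X × A × X → ℝ, α ∈ (0,1), and P(x,a) nonempty sets of probability measures on X. Then the operator H defined by (Hq)(x,a) := inf_{P ∈ P(x,a)} E_P[r(x,a,X₁) + α·max_{b ∈ A} q(X₁,b)] has a unique fixed point Q* in the space of real-valued functions on X × A, and for any initial Q₀, the iterates H^n Q₀ converge to Q* in supremum norm. -/
open Finset Filter

private lemma robust_lb {X : Type*} [Fintype X] [Nonempty X] (p g : X → ℝ)
    (hp0 : ∀ y, 0 ≤ p y) (hp1 : ∑ y, p y = 1) :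
    univ.inf' univ_nonempty g ≤ ∑ y, p y * g y := by
  calc univ.inf' univ_nonempty g = ∑ y, p y * univ.inf' univ_nonempty g := by
        rw [← Finset.sum_mul, hp1, one_mul]
    _ ≤ ∑ y, p y * g y :=
        Finset.sum_le_sum fun y _ =>
          mul_le_mul_of_nonneg_left (Finset.inf'_le _ (mem_univ y)) (hp0 y)

private lemma robust_sInf_le {β : Type*} {S : Set β} (hS : S.Nonempty) (f g : β → ℝ) (c : ℝ)
    (hbdd : BddBelow (f '' S)) (h : ∀ p ∈ S, f p ≤ g p + c) :
    sInf (f '' S) ≤ sInf (g '' S) + c := by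
  rw [← sub_le_iff_le_add]
  apply le_csInf (hS.image g)
  rintro v ⟨p, hp, rfl⟩
  have h1 : sInf (f '' S) ≤ f p := csInf_le hbdd ⟨p, hp, rfl⟩
  linarith [h p hp]

/-- The robust Bellman operator `H` has a unique fixed point `Q*`, and for any
initial `Q₀` the iterates `H^[n] Q₀` converge to `Q*` in supremum norm. -/
theorem robust_H_unique_fixed_point
    {X A : Type*} [Fintype X] [Fintype A] [Nonempty X] [Nonempty A]
    (r : X → A → X → ℝ) (α : ℝ) (hα : 0 < α) (hα1 : α < 1)
    (P : X → A → Set (X → ℝ))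
    (hPne : ∀ x a, (P x a).Nonempty)
    (hPprob : ∀ x a, ∀ p ∈ P x a, (∀ y, 0 ≤ p y) ∧ ∑ y, p y = 1)
    (H : (X → A → ℝ) → (X → A → ℝ))
    (hH : ∀ Q x a, H Q x a =
      sInf ((fun p : X → ℝ =>
        ∑ y, p y * (r x a y + α * (univ.sup' univ_nonempty fun b => Q y b))) '' P x a)) :
    ∃ Qstar : X → A → ℝ,
      H Qstar = Qstar ∧ (∀ Q', H Q' = Q' → Q' = Qstar) ∧
      ∀ Q₀ : X → A → ℝ,
        Tendsto (fun n : ℕ =>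
            univ.sup' univ_nonempty fun xa : X × A =>
              |(H^[n] Q₀) xa.1 xa.2 - Qstar xa.1 xa.2|)
          atTop (nhds 0) := by
  classical
  -- pointwise distance bound
  have hpt : ∀ (Q Q' : X → A → ℝ) x a, |Q x a - Q' x a| ≤ dist Q Q' := by
    intro Q Q' x a
    have h1 := dist_le_pi_dist Q Q' x
    have h2 := dist_le_pi_dist (Q x) (Q' x) a
    rw [Real.dist_eq] at h2
    linarith
  -- main one-sided estimate
  have main : ∀ Q Q' : X → A → ℝ, ∀ x a, H Q x a ≤ H Q' x a + α * dist Q Q' := by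
    intro Q Q' x a
    set D := dist Q Q' with hD
    have hsup : ∀ y, (univ.sup' univ_nonempty fun b => Q y b)
        ≤ (univ.sup' univ_nonempty fun b => Q' y b) + D := by
      intro y
      apply Finset.sup'_le
      intro b _
      have h1 : |Q y b - Q' y b| ≤ D := hpt Q Q' y b
      have h2 : Q' y b ≤ univ.sup' univ_nonempty fun b => Q' y b :=
        Finset.le_sup' _ (mem_univ b)
      have := abs_le.mp h1
      linarith [this.2]
    rw [hH, hH]
    have hbdd : BddBelow ((fun p : X → ℝ =>
        ∑ y, p y * (r x a y + α * (univ.sup' univ_nonempty fun b => Q y b))) '' P x a) := by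
      refine ⟨univ.inf' univ_nonempty fun y =>
        r x a y + α * (univ.sup' univ_nonempty fun b => Q y b), ?_⟩
      rintro v ⟨p, hp, rfl⟩
      exact robust_lb p _ (hPprob x a p hp).1 (hPprob x a p hp).2
    refine robust_sInf_le (hPne x a) _ _ (α * D) hbdd ?_
    intro p hp
    have hp0 := (hPprob x a p hp).1
    have hp1 := (hPprob x a p hp).2
    calc ∑ y, p y * (r x a y + α * (univ.sup' univ_nonempty fun b => Q y b))
        ≤ ∑ y, p y * (r x a y + α * ((univ.sup' univ_nonempty fun b => Q' y b) + D)) := by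
          apply Finset.sum_le_sum
          intro y _
          apply mul_le_mul_of_nonneg_left _ (hp0 y)
          have := hsup y
          nlinarith [hα.le]
      _ = ∑ y, (p y * (r x a y + α * (univ.sup' univ_nonempty fun b => Q' y b))
            + p y * (α * D)) := Finset.sum_congr rfl (fun y _ => by ring)
      _ = (∑ y, p y * (r x a y + α * (univ.sup' univ_nonempty fun b => Q' y b)))
            + ∑ y, p y * (α * D) := Finset.sum_add_distrib
      _ = (∑ y, p y * (r x a y + α * (univ.sup' univ_nonempty fun b => Q' y b)))
            + α * D := by rw [← Finset.sum_mul, hp1, one_mul]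
  -- H is Lipschitz with constant α
  set K : NNReal := ⟨α, hα.le⟩ with hKdef
  have hKcoe : (K : ℝ) = α := rfl
  have hlip : LipschitzWith K H := by
    apply LipschitzWith.of_dist_le_mul
    intro Q Q'
    rw [hKcoe]
    have hnn : 0 ≤ α * dist Q Q' := mul_nonneg hα.le dist_nonneg
    rw [dist_pi_le_iff hnn]
    intro x
    rw [dist_pi_le_iff hnn]
    intro a
    rw [Real.dist_eq, abs_sub_le_iff]
    constructor
    · linarith [main Q Q' x a]
    · have := main Q' Q x a
      rw [dist_comm] at this
      linarith
  have hc : ContractingWith K H := ⟨by exact_mod_cast hα1, hlip⟩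
  refine ⟨hc.fixedPoint H, hc.fixedPoint_isFixedPt, ?_, ?_⟩
  · intro Q' hQ'
    exact hc.fixedPoint_unique hQ'
  · intro Q₀
    have hten : Tendsto (fun n => dist (H^[n] Q₀) (hc.fixedPoint H)) atTop (nhds 0) := by
      have := hc.tendsto_iterate_fixedPoint Q₀
      rwa [tendsto_iff_dist_tendsto_zero] at this
    apply squeeze_zero (fun n => ?_) (fun n => ?_) hten
    · apply Finset.le_sup' (f := fun xa : X × A =>
        |(H^[n] Q₀) xa.1 xa.2 - (hc.fixedPoint H) xa.1 xa.2|)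
        (mem_univ (Classical.arbitrary (X × A))) |>.trans' (abs_nonneg _)
    · apply Finset.sup'_le
      intro xa _
      exact hpt _ _ xa.1 xa.2
end

section
/- The 1-Wasserstein distance between two binomial distributions with the same number of trials n and success probabilities p and p' equals n·|p − p'|: W₁(Bin(n,p), Bin(n,p')) = n·|p − p'|. -/
open Finset

lemma sum_choose_mul (m : ℕ) (a b : ℝ) :
    ∑ k ∈ Finset.range (m+1), (m.choose k : ℝ) * a^k * b^(m-k) = (a+b)^m := by
  rw [add_pow]
  exact Finset.sum_congr rfl fun k _ => by ring

lemma binom_mean (n : ℕ) (p : ℝ) :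
    ∑ i ∈ Finset.range (n+1), (i:ℝ) * ((n.choose i : ℝ) * p^i * (1-p)^(n-i)) = n * p := by
  cases n with
  | zero => simp
  | succ m =>
    rw [Finset.sum_range_succ']
    have h : ∀ k ∈ Finset.range (m+1),
        ((k+1 : ℕ):ℝ) * (((m+1).choose (k+1) : ℝ) * p^(k+1) * (1-p)^(m+1-(k+1)))
        = ((m+1 : ℕ):ℝ) * p * ((m.choose k : ℝ) * p^k * (1-p)^(m-k)) := by
      intro k _
      have hc : ((m+1 : ℕ):ℝ) * (m.choose k : ℝ)
          = ((m+1).choose (k+1) : ℝ) * ((k+1 : ℕ):ℝ) := by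
        exact_mod_cast congrArg (Nat.cast : ℕ → ℝ) (Nat.add_one_mul_choose_eq m k)
      have he : m + 1 - (k+1) = m - k := by omega
      rw [he]
      push_cast
      push_cast at hc
      linear_combination (-(p^(k+1)*(1-p)^(m-k))) * hc
    rw [Finset.sum_congr rfl h]
    simp only [Nat.cast_zero, zero_mul, add_zero]
    rw [← Finset.mul_sum, sum_choose_mul, show p + (1-p) = 1 by ring, one_pow, mul_one]

lemma coupling_aux (n : ℕ) (p p' : ℝ) (h0 : 0 ≤ p) (hpp : p ≤ p') (h1' : p' ≤ 1) :
    ∃ π : Fin (n + 1) → Fin (n + 1) → ℝ,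
        (∀ i j, 0 ≤ π i j) ∧
        (∀ i : Fin (n + 1), ∑ j, π i j = (n.choose (i : ℕ) : ℝ) * p ^ (i : ℕ) * (1 - p) ^ (n - (i : ℕ))) ∧
        (∀ j : Fin (n + 1), ∑ i, π i j = (n.choose (j : ℕ) : ℝ) * p' ^ (j : ℕ) * (1 - p') ^ (n - (j : ℕ))) ∧
        (n : ℝ) * (p' - p) = ∑ i : Fin (n + 1), ∑ j : Fin (n + 1),
          |((i : ℕ) : ℝ) - ((j : ℕ) : ℝ)| * π i j := by
  classical
  -- the trinomial coupling
  let f : ℕ → ℕ → ℝ := fun i j =>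
    if i ≤ j then (n.choose j : ℝ) * (j.choose i : ℝ) * p^i * (p'-p)^(j-i) * (1-p')^(n-j) else 0
  have hpos : ∀ i j, 0 ≤ f i j := by
    intro i j
    by_cases h : i ≤ j
    · simp only [f, if_pos h]
      have h1 : (0:ℝ) ≤ p' - p := by linarith
      have h2 : (0:ℝ) ≤ 1 - p' := by linarith
      have := pow_nonneg h0 i
      have := pow_nonneg h1 (j - i)
      have := pow_nonneg h2 (n - j)
      positivity
    · simp [f, h]
  have hrow : ∀ i, i ≤ n → ∑ j ∈ range (n+1), f i j
      = (n.choose i : ℝ) * p^i * (1-p)^(n-i) := by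
    intro i hi
    have h1 : ∑ j ∈ Finset.Ico i (n+1), f i j = ∑ j ∈ range (n+1), f i j := by
      apply Finset.sum_subset
      · intro x hx
        simp only [Finset.mem_Ico] at hx
        simp only [Finset.mem_range]
        omega
      · intro x hx hx'
        simp only [Finset.mem_range] at hx
        simp only [Finset.mem_Ico] at hx'
        have hni : ¬ i ≤ x := by omega
        simp [f, hni]
    rw [← h1, Finset.sum_Ico_eq_sum_range]
    have h2 : ∀ k ∈ range (n+1-i), f i (i+k)
        = (n.choose i : ℝ) * p^i * (((n-i).choose k : ℝ) * (p'-p)^k * (1-p')^((n-i)-k)) := by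
      intro k hk
      simp only [Finset.mem_range] at hk
      have hik : i + k ≤ n := by omega
      have hcc : ((n.choose (i+k)) * ((i+k).choose i) : ℝ)
          = ((n.choose i) * ((n-i).choose k) : ℝ) := by
        have := Nat.choose_mul (n := n) (Nat.le_add_right i k)
        have he : i + k - i = k := by omega
        rw [he] at this
        exact_mod_cast congrArg (Nat.cast : ℕ → ℝ) this
      have he1 : i + k - i = k := by omega
      have he2 : n - (i+k) = (n-i) - k := by omega
      simp only [f, if_pos (Nat.le_add_right i k), he1, he2]
      push_cast at hcc ⊢
      linear_combination (p^i * (p'-p)^k * (1-p')^((n-i)-k)) * hcc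
    rw [Finset.sum_congr rfl h2, ← Finset.mul_sum]
    have h3 : n + 1 - i = (n-i) + 1 := by omega
    rw [h3, sum_choose_mul, show (p'-p) + (1-p') = 1 - p by ring]
  have hcol : ∀ j, j ≤ n → ∑ i ∈ range (n+1), f i j
      = (n.choose j : ℝ) * p'^j * (1-p')^(n-j) := by
    intro j hj
    have h1 : ∑ i ∈ range (j+1), f i j = ∑ i ∈ range (n+1), f i j := by
      apply Finset.sum_subset
      · intro x hx
        simp only [Finset.mem_range] at *
        omega
      · intro x hx hx'
        simp only [Finset.mem_range] at hx hx'
        have hni : ¬ x ≤ j := by omega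
        simp [f, hni]
    rw [← h1]
    have h2 : ∀ i ∈ range (j+1), f i j
        = ((n.choose j : ℝ) * (1-p')^(n-j)) * ((j.choose i : ℝ) * p^i * (p'-p)^(j-i)) := by
      intro i hi
      simp only [Finset.mem_range] at hi
      simp only [f, if_pos (by omega : i ≤ j)]
      ring
    rw [Finset.sum_congr rfl h2, ← Finset.mul_sum, sum_choose_mul,
      show p + (p'-p) = p' by ring]
    ring
  have habs : ∀ i j : ℕ, |(i:ℝ) - (j:ℝ)| * f i j = ((j:ℝ) - (i:ℝ)) * f i j := by
    intro i j
    by_cases h : i ≤ j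
    · have hij : (i:ℝ) ≤ (j:ℝ) := by exact_mod_cast h
      rw [abs_of_nonpos (by linarith), neg_sub]
    · simp [f, h]
  refine ⟨fun i j => f (i:ℕ) (j:ℕ), fun i j => hpos _ _, ?_, ?_, ?_⟩
  · intro i
    rw [Fin.sum_univ_eq_sum_range (fun j => f (i:ℕ) j)]
    exact hrow (i:ℕ) (by omega)
  · intro j
    rw [Fin.sum_univ_eq_sum_range (fun i => f i (j:ℕ))]
    exact hcol (j:ℕ) (by omega)
  · have e1 : (∑ i : Fin (n+1), ∑ j : Fin (n+1), |((i:ℕ):ℝ) - ((j:ℕ):ℝ)| * f (i:ℕ) (j:ℕ))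
        = ∑ i ∈ range (n+1), ∑ j ∈ range (n+1), |(i:ℝ) - (j:ℝ)| * f i j := by
      rw [Fin.sum_univ_eq_sum_range
        (fun i => ∑ j : Fin (n+1), |(i:ℝ) - ((j:ℕ):ℝ)| * f i (j:ℕ))]
      exact Finset.sum_congr rfl fun i _ =>
        Fin.sum_univ_eq_sum_range (fun j => |(i:ℝ) - (j:ℝ)| * f i j) _
    rw [e1]
    have e2 : (∑ i ∈ range (n+1), ∑ j ∈ range (n+1), |(i:ℝ) - (j:ℝ)| * f i j)
        = (∑ j ∈ range (n+1), (j:ℝ) * ∑ i ∈ range (n+1), f i j)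
          - (∑ i ∈ range (n+1), (i:ℝ) * ∑ j ∈ range (n+1), f i j) := by
      simp_rw [habs, sub_mul, Finset.sum_sub_distrib, Finset.mul_sum]
      congr 1
      rw [Finset.sum_comm]
    rw [e2]
    have e3 : ∑ j ∈ range (n+1), (j:ℝ) * ∑ i ∈ range (n+1), f i j = n * p' := by
      rw [Finset.sum_congr rfl fun j hj => by
        rw [hcol j (by simpa [Nat.lt_succ_iff] using Finset.mem_range.mp hj)]]
      exact binom_mean n p'
    have e4 : ∑ i ∈ range (n+1), (i:ℝ) * ∑ j ∈ range (n+1), f i j = n * p := by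
      rw [Finset.sum_congr rfl fun i hi => by
        rw [hrow i (by simpa [Nat.lt_succ_iff] using Finset.mem_range.mp hi)]]
      exact binom_mean n p
    rw [e3, e4]
    ring

/-- The 1-Wasserstein distance between `Bin(n,p)` and `Bin(n,p')`, given as the
minimal transport cost over couplings, equals `n * |p - p'|`. -/
theorem w1_binomial
    (n : ℕ) (p p' : ℝ) (h0 : 0 ≤ p) (h1 : p ≤ 1) (h0' : 0 ≤ p') (h1' : p' ≤ 1) :
    sInf { w : ℝ | ∃ π : Fin (n + 1) → Fin (n + 1) → ℝ,
        (∀ i j, 0 ≤ π i j) ∧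
        (∀ i : Fin (n + 1), ∑ j, π i j = (n.choose (i : ℕ) : ℝ) * p ^ (i : ℕ) * (1 - p) ^ (n - (i : ℕ))) ∧
        (∀ j : Fin (n + 1), ∑ i, π i j = (n.choose (j : ℕ) : ℝ) * p' ^ (j : ℕ) * (1 - p') ^ (n - (j : ℕ))) ∧
        w = ∑ i : Fin (n + 1), ∑ j : Fin (n + 1), |((i : ℕ) : ℝ) - ((j : ℕ) : ℝ)| * π i j } = n * |p - p'| := by
  have hmem : ((n:ℝ) * |p - p'|) ∈ { w : ℝ | ∃ π : Fin (n + 1) → Fin (n + 1) → ℝ,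
        (∀ i j, 0 ≤ π i j) ∧
        (∀ i : Fin (n + 1), ∑ j, π i j = (n.choose (i : ℕ) : ℝ) * p ^ (i : ℕ) * (1 - p) ^ (n - (i : ℕ))) ∧
        (∀ j : Fin (n + 1), ∑ i, π i j = (n.choose (j : ℕ) : ℝ) * p' ^ (j : ℕ) * (1 - p') ^ (n - (j : ℕ))) ∧
        w = ∑ i : Fin (n + 1), ∑ j : Fin (n + 1), |((i : ℕ) : ℝ) - ((j : ℕ) : ℝ)| * π i j } := by
    rcases le_total p p' with h | h
    · obtain ⟨π, ha, hb, hc, hd⟩ := coupling_aux n p p' h0 h h1'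
      refine ⟨π, ha, hb, hc, ?_⟩
      rw [show |p - p'| = p' - p by rw [abs_of_nonpos (by linarith)]; ring]
      exact hd
    · obtain ⟨π, ha, hb, hc, hd⟩ := coupling_aux n p' p h0' h h1
      refine ⟨fun i j => π j i, fun i j => ha j i, fun i => hc i, fun j => hb j, ?_⟩
      rw [show |p - p'| = p - p' by rw [abs_of_nonneg (by linarith)]]
      rw [hd, Finset.sum_comm]
      exact Finset.sum_congr rfl fun i _ => Finset.sum_congr rfl fun j _ => by
        rw [abs_sub_comm]
  have hlb : ∀ w ∈ { w : ℝ | ∃ π : Fin (n + 1) → Fin (n + 1) → ℝ,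
        (∀ i j, 0 ≤ π i j) ∧
        (∀ i : Fin (n + 1), ∑ j, π i j = (n.choose (i : ℕ) : ℝ) * p ^ (i : ℕ) * (1 - p) ^ (n - (i : ℕ))) ∧
        (∀ j : Fin (n + 1), ∑ i, π i j = (n.choose (j : ℕ) : ℝ) * p' ^ (j : ℕ) * (1 - p') ^ (n - (j : ℕ))) ∧
        w = ∑ i : Fin (n + 1), ∑ j : Fin (n + 1), |((i : ℕ) : ℝ) - ((j : ℕ) : ℝ)| * π i j },
      (n:ℝ) * |p - p'| ≤ w := by
    rintro w ⟨π, hpos, hrow, hcol, rfl⟩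
    have A : ∑ i : Fin (n+1), ((i:ℕ):ℝ) * ∑ j, π i j = n * p := by
      rw [Finset.sum_congr rfl fun i (_ : i ∈ Finset.univ) => by rw [hrow i]]
      rw [Fin.sum_univ_eq_sum_range
        (fun i => (i:ℝ) * ((n.choose i : ℝ) * p ^ i * (1 - p) ^ (n - i)))]
      exact binom_mean n p
    have B : ∑ j : Fin (n+1), ((j:ℕ):ℝ) * ∑ i, π i j = n * p' := by
      rw [Finset.sum_congr rfl fun j (_ : j ∈ Finset.univ) => by rw [hcol j]]
      rw [Fin.sum_univ_eq_sum_range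
        (fun j => (j:ℝ) * ((n.choose j : ℝ) * p' ^ j * (1 - p') ^ (n - j)))]
      exact binom_mean n p'
    have C : (n:ℝ) * p - (n:ℝ) * p'
        = ∑ i : Fin (n+1), ∑ j : Fin (n+1), (((i:ℕ):ℝ) - ((j:ℕ):ℝ)) * π i j := by
      have : (∑ i : Fin (n+1), ∑ j : Fin (n+1), (((i:ℕ):ℝ) - ((j:ℕ):ℝ)) * π i j)
          = (∑ i : Fin (n+1), ((i:ℕ):ℝ) * ∑ j, π i j)
            - (∑ j : Fin (n+1), ((j:ℕ):ℝ) * ∑ i, π i j) := by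
        simp_rw [sub_mul, Finset.sum_sub_distrib, Finset.mul_sum]
        congr 1
        rw [Finset.sum_comm]
      rw [this, A, B]
    have D : (n:ℝ) * |p - p'| = |(n:ℝ) * p - (n:ℝ) * p'| := by
      rw [show (n:ℝ) * p - (n:ℝ) * p' = (n:ℝ) * (p - p') by ring, abs_mul,
        abs_of_nonneg (by positivity : (0:ℝ) ≤ (n:ℝ))]
    rw [D, C]
    calc |∑ i : Fin (n+1), ∑ j : Fin (n+1), (((i:ℕ):ℝ) - ((j:ℕ):ℝ)) * π i j|
        ≤ ∑ i : Fin (n+1), |∑ j : Fin (n+1), (((i:ℕ):ℝ) - ((j:ℕ):ℝ)) * π i j| :=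
          Finset.abs_sum_le_sum_abs _ _
      _ ≤ ∑ i : Fin (n+1), ∑ j : Fin (n+1), |(((i:ℕ):ℝ) - ((j:ℕ):ℝ)) * π i j| :=
          Finset.sum_le_sum fun i _ => Finset.abs_sum_le_sum_abs _ _
      _ = ∑ i : Fin (n+1), ∑ j : Fin (n+1), |((i:ℕ):ℝ) - ((j:ℕ):ℝ)| * π i j := by
          refine Finset.sum_congr rfl fun i _ => Finset.sum_congr rfl fun j _ => ?_
          rw [abs_mul, abs_of_nonneg (hpos i j)]
  exact le_antisymm (csInf_le ⟨(n:ℝ) * |p - p'|, fun w hw => hlb w hw⟩ hmem)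
    (le_csInf ⟨_, hmem⟩ hlb)
end

section
/- Strong duality for Wasserstein distributionally robust optimization on a finite space: Let X be a nonempty finite subset of ℝ^d, f : X → ℝ, ε > 0, q ≥ 1 an integer, P̂ a probability measure on X, and c(x,y) := ‖x − y‖^q. Then inf over all probability measures P on X with W_q(P, P̂) ≤ ε of E_P[f] equals sup_{λ ≥ 0} ( E_{P̂}[ −(−f)^{λc} ] − ε^q λ ), where (−f)^{λc}(x) := max_{y ∈ X}( −f(y) − λ‖x−y‖^q ). -/
/-!
The Wasserstein ball around `P̂` is the set of second marginals of transport plans with first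
marginal `P̂` and cost at most `ε ^ q`, so the primal value is `V (ε ^ q)` for the value function
`V t = inf {E_π f | π has first marginal P̂ and cost π ≤ t}`. Mixing plans shows that `V` is convex
and antitone on `[0, ∞)`, hence it has a supporting line of slope `-λ ≤ 0` at the interior point
`ε ^ q`. For this `λ`, the Lagrangian `E_π f + λ (cost π - ε ^ q)` is minimised by a deterministic
plan sending `x` to a maximiser of `-f y - λ c(x, y)`, and its minimum is the dual objective at `λ`;
the supporting line bounds it below by `V (ε ^ q)`. Weak duality gives the reverse inequality for
every `λ ≥ 0`, so the dual supremum is attained and equals the primal value.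
-/

open Finset Set Pointwise Filter Topology

theorem ConvexOn.exists_forall_le_of_mem_interior {s : Set ℝ} {f : ℝ → ℝ}
    (hf : ConvexOn ℝ s f) {t₀ : ℝ} (ht₀ : t₀ ∈ interior s) :
    ∃ m, ∀ t ∈ s, f t₀ + m * (t - t₀) ≤ f t := by
  have hs : ∀ᶠ r in 𝓝 t₀, r ∈ s := mem_interior_iff_mem_nhds.mp ht₀
  obtain ⟨a, hat, has⟩ := hs.exists_lt
  obtain ⟨b, hbt, hbs⟩ := hs.exists_gt
  set L := (fun r => (f t₀ - f r) / (t₀ - r)) '' (s ∩ Iio t₀)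
  have hL : BddAbove L := by
    refine ⟨(f b - f t₀) / (b - t₀), ?_⟩
    rintro _ ⟨r, ⟨hr, hrt⟩, rfl⟩
    exact hf.slope_mono_adjacent hr hbs hrt hbt
  refine ⟨sSup L, fun t ht => ?_⟩
  rcases lt_trichotomy t t₀ with htt | rfl | htt
  · have := le_csSup hL ⟨t, ⟨ht, htt⟩, rfl⟩
    rw [div_le_iff₀ (sub_pos.mpr htt)] at this
    linarith
  · simp
  · have : sSup L ≤ (f t - f t₀) / (t - t₀) := by
      refine csSup_le ⟨_, ⟨a, ⟨has, hat⟩, rfl⟩⟩ ?_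
      rintro _ ⟨r, ⟨hr, hrt⟩, rfl⟩
      exact hf.slope_mono_adjacent hr ht hrt htt
    rw [le_div_iff₀ (sub_pos.mpr htt)] at this
    linarith

section

variable {X : Type*} [Fintype X]

def primalValues (C : X → X → ℝ) (f phat : X → ℝ) (t : ℝ) : Set ℝ :=
  {e | ∃ π : X → X → ℝ, (∀ x y, 0 ≤ π x y) ∧ (∀ x, ∑ y, π x y = phat x) ∧
    ∑ x, ∑ y, C x y * π x y ≤ t ∧ e = ∑ x, ∑ y, π x y * f y}

noncomputable def primalValue (C : X → X → ℝ) (f phat : X → ℝ) (t : ℝ) : ℝ :=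
  sInf (primalValues C f phat t)

variable {C : X → X → ℝ} {f phat : X → ℝ}

theorem setOf_coupling_eq_primalValues (hphat1 : ∑ x, phat x = 1) (t : ℝ) :
    { E : ℝ | ∃ p : X → ℝ, (∀ y, 0 ≤ p y) ∧ (∑ y, p y = 1) ∧
        (∃ π : X → X → ℝ, (∀ x y, 0 ≤ π x y) ∧
          (∀ x, ∑ y, π x y = phat x) ∧ (∀ y, ∑ x, π x y = p y) ∧
          (∑ x, ∑ y, C x y * π x y) ≤ t) ∧
        E = ∑ y, p y * f y } = primalValues C f phat t := by
  ext e
  constructor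
  · rintro ⟨p, -, -, ⟨π, hπ, hrow, hcol, hcost⟩, rfl⟩
    refine ⟨π, hπ, hrow, hcost, ?_⟩
    simp only [← hcol, Finset.sum_mul]
    exact Finset.sum_comm
  · rintro ⟨π, hπ, hrow, hcost, rfl⟩
    refine ⟨fun y => ∑ x, π x y, fun y => sum_nonneg fun x _ => hπ x y, ?_,
      ⟨π, hπ, hrow, fun y => rfl, hcost⟩, ?_⟩
    · rw [Finset.sum_comm]
      simp only [hrow, hphat1]
    · simp only [Finset.sum_mul]
      exact Finset.sum_comm

theorem mem_primalValues_of_map (hphat : ∀ x, 0 ≤ phat x) (g : X → X) :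
    ∑ x, phat x * f (g x) ∈ primalValues C f phat (∑ x, phat x * C x (g x)) := by
  classical
  refine ⟨fun x y => if y = g x then phat x else 0, fun x y => ?_, fun x => ?_, ?_, ?_⟩
  · dsimp only
    split_ifs <;> simp [hphat]
  all_goals simp [mul_comm]

theorem primalValues_mono {s t : ℝ} (hst : s ≤ t) :
    primalValues C f phat s ⊆ primalValues C f phat t := by
  rintro e ⟨π, hπ, hrow, hcost, rfl⟩
  exact ⟨π, hπ, hrow, hcost.trans hst, rfl⟩

theorem primalValues_nonempty (hC0 : ∀ x, C x x = 0) (hphat : ∀ x, 0 ≤ phat x) {t : ℝ}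
    (ht : 0 ≤ t) : (primalValues C f phat t).Nonempty :=
  ⟨_, primalValues_mono (by simpa [hC0] using ht) (mem_primalValues_of_map hphat id)⟩

theorem smul_add_smul_primalValues_subset {a b : ℝ} (ha : 0 ≤ a) (hb : 0 ≤ b) (hab : a + b = 1)
    (s t : ℝ) : a • primalValues C f phat s + b • primalValues C f phat t ⊆
      primalValues C f phat (a * s + b * t) := by
  rintro _ ⟨_, ⟨_, ⟨π₁, hπ₁, hrow₁, hcost₁, rfl⟩, rfl⟩, _, ⟨_, ⟨π₂, hπ₂, hrow₂, hcost₂, rfl⟩, rfl⟩, rfl⟩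
  refine ⟨fun x y => a * π₁ x y + b * π₂ x y, fun x y =>
    add_nonneg (mul_nonneg ha (hπ₁ x y)) (mul_nonneg hb (hπ₂ x y)), fun x => ?_, ?_, ?_⟩
  · simp only [Finset.sum_add_distrib, ← Finset.mul_sum, hrow₁, hrow₂]
    linear_combination phat x * hab
  · simp only [mul_add, Finset.sum_add_distrib, mul_left_comm _ a, mul_left_comm _ b,
      ← Finset.mul_sum]
    gcongr
  · simp only [smul_eq_mul, add_mul, Finset.sum_add_distrib, mul_assoc, ← Finset.mul_sum]

variable [Nonempty X]

theorem inf'_le_of_mem_primalValues (hphat1 : ∑ x, phat x = 1) {t e : ℝ}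
    (he : e ∈ primalValues C f phat t) : univ.inf' univ_nonempty f ≤ e := by
  obtain ⟨π, hπ, hrow, -, rfl⟩ := he
  calc univ.inf' univ_nonempty f = ∑ x, ∑ y, π x y * univ.inf' univ_nonempty f := by
        simp only [← Finset.sum_mul, hrow, hphat1, one_mul]
    _ ≤ ∑ x, ∑ y, π x y * f y := by
        gcongr with x _ y _
        · exact hπ x y
        · exact inf'_le _ (mem_univ y)

theorem bddBelow_primalValues (hphat1 : ∑ x, phat x = 1) (t : ℝ) :
    BddBelow (primalValues C f phat t) :=
  ⟨_, fun _ => inf'_le_of_mem_primalValues hphat1⟩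

theorem antitoneOn_primalValue (hC0 : ∀ x, C x x = 0) (hphat : ∀ x, 0 ≤ phat x)
    (hphat1 : ∑ x, phat x = 1) : AntitoneOn (primalValue C f phat) (Ici 0) :=
  fun _ hs _ _ hst => csInf_le_csInf (bddBelow_primalValues hphat1 _)
    (primalValues_nonempty hC0 hphat hs) (primalValues_mono hst)

theorem convexOn_primalValue (hC0 : ∀ x, C x x = 0) (hphat : ∀ x, 0 ≤ phat x)
    (hphat1 : ∑ x, phat x = 1) : ConvexOn ℝ (Ici 0) (primalValue C f phat) := by
  refine ⟨convex_Ici 0, fun s hs t ht a b ha hb hab => ?_⟩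
  have hne := fun {r : ℝ} (hr : r ∈ Ici (0 : ℝ)) => primalValues_nonempty (f := f) hC0 hphat hr
  have hbdd := bddBelow_primalValues (C := C) (f := f) hphat1
  calc primalValue C f phat (a • s + b • t)
      ≤ sInf (a • primalValues C f phat s + b • primalValues C f phat t) :=
        csInf_le_csInf (hbdd _) ((hne hs).smul_set.add (hne ht).smul_set)
          (smul_add_smul_primalValues_subset ha hb hab s t)
    _ = a • primalValue C f phat s + b • primalValue C f phat t := by
        rw [csInf_add (hne hs).smul_set ((hbdd s).smul_of_nonneg ha) (hne ht).smul_set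
          ((hbdd t).smul_of_nonneg hb), Real.sInf_smul_of_nonneg ha,
          Real.sInf_smul_of_nonneg hb]
        rfl

theorem exists_lagrange_multiplier (hC0 : ∀ x, C x x = 0) (hphat : ∀ x, 0 ≤ phat x)
    (hphat1 : ∑ x, phat x = 1) {t : ℝ} (ht : 0 < t) :
    ∃ l, 0 ≤ l ∧ ∀ s, 0 ≤ s → primalValue C f phat t ≤ primalValue C f phat s + l * (s - t) := by
  obtain ⟨m, hm⟩ := (convexOn_primalValue hC0 hphat hphat1).exists_forall_le_of_mem_interior
    (t₀ := t) (by rwa [interior_Ici])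
  have hanti : primalValue C f phat (t + 1) ≤ primalValue C f phat t :=
    antitoneOn_primalValue hC0 hphat hphat1 ht.le (by rw [Set.mem_Ici]; linarith)
      (by linarith)
  have hm1 := hm (t + 1) (by rw [Set.mem_Ici]; linarith)
  refine ⟨-m, by linarith, fun s hs => ?_⟩
  linarith [hm s hs]

variable (C f phat) in
noncomputable def dualObjective (t l : ℝ) : ℝ :=
  (∑ x, phat x * -(univ.sup' univ_nonempty fun y => -f y - l * C x y)) - t * l

theorem dualObjective_le {t l e : ℝ} (hl : 0 ≤ l)
    (he : e ∈ primalValues C f phat t) : dualObjective C f phat t l ≤ e := by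
  obtain ⟨π, hπ, hrow, hcost, rfl⟩ := he
  have hsup : ∀ x y, -(univ.sup' univ_nonempty fun y => -f y - l * C x y) ≤ f y + l * C x y :=
    fun x y => by linarith [le_sup' (fun y => -f y - l * C x y) (mem_univ y)]
  calc dualObjective C f phat t l
      = (∑ x, ∑ y, π x y * -(univ.sup' univ_nonempty fun y => -f y - l * C x y)) - t * l := by
        simp only [dualObjective, ← Finset.sum_mul, hrow]
    _ ≤ (∑ x, ∑ y, π x y * (f y + l * C x y)) - l * ∑ x, ∑ y, C x y * π x y := by
        rw [mul_comm t]
        gcongr with x _ y _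
        · exact hπ x y
        · exact hsup x y
    _ = ∑ x, ∑ y, π x y * f y := by
        simp only [mul_add, Finset.sum_add_distrib, Finset.mul_sum]
        rw [add_sub_assoc, add_eq_left, sub_eq_zero]
        exact sum_congr rfl fun x _ => sum_congr rfl fun y _ => by ring

theorem exists_map_dualObjective_eq (t l : ℝ) : ∃ g : X → X,
    dualObjective C f phat t l = ∑ x, phat x * f (g x) + l * (∑ x, phat x * C x (g x) - t) := by
  choose g hg using fun x => exists_mem_eq_sup' univ_nonempty fun y => -f y - l * C x y
  have hphat_mul : ∀ x, phat x * -(-f (g x) - l * C x (g x)) =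
      phat x * f (g x) + l * (phat x * C x (g x)) := fun x => by ring
  refine ⟨g, ?_⟩
  simp only [dualObjective, fun x => (hg x).2, hphat_mul, sum_add_distrib, ← mul_sum]
  ring

theorem dualObjective_le_primalValue (hC0 : ∀ x, C x x = 0) (hphat : ∀ x, 0 ≤ phat x) {t l : ℝ}
    (ht : 0 ≤ t) (hl : 0 ≤ l) : dualObjective C f phat t l ≤ primalValue C f phat t :=
  le_csInf (primalValues_nonempty hC0 hphat ht) fun _ => dualObjective_le hl

theorem isGreatest_dualObjective (hC0 : ∀ x, C x x = 0) (hC : ∀ x y, 0 ≤ C x y)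
    (hphat : ∀ x, 0 ≤ phat x) (hphat1 : ∑ x, phat x = 1) {t : ℝ} (ht : 0 < t) :
    IsGreatest {g | ∃ l, 0 ≤ l ∧ g = dualObjective C f phat t l} (primalValue C f phat t) := by
  refine ⟨?_, ?_⟩
  · obtain ⟨l, hl, hmult⟩ := exists_lagrange_multiplier hC0 hphat hphat1 ht
    obtain ⟨g, hg⟩ := exists_map_dualObjective_eq (C := C) (f := f) (phat := phat) t l
    refine ⟨l, hl, le_antisymm ?_ (dualObjective_le_primalValue hC0 hphat ht.le hl)⟩
    have hcost : 0 ≤ ∑ x, phat x * C x (g x) :=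
      sum_nonneg fun x _ => mul_nonneg (hphat x) (hC x _)
    calc primalValue C f phat t
        ≤ primalValue C f phat (∑ x, phat x * C x (g x)) + l * (∑ x, phat x * C x (g x) - t) :=
          hmult _ hcost
      _ ≤ dualObjective C f phat t l := by
          rw [hg]
          gcongr
          exact csInf_le (bddBelow_primalValues hphat1 _) (mem_primalValues_of_map hphat g)
  · rintro _ ⟨l, hl, rfl⟩
    exact dualObjective_le_primalValue hC0 hphat ht.le hl

end

theorem wasserstein_strong_duality_general
    {X : Type*} [Fintype X] [Nonempty X] {d : ℕ}
    (ι : X → EuclideanSpace ℝ (Fin d))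
    (f : X → ℝ) (ε : ℝ) (hε : 0 < ε) (q : ℕ) (hq : 1 ≤ q)
    (phat : X → ℝ) (hphat : ∀ x, 0 ≤ phat x) (hphat1 : ∑ x, phat x = 1) :
    sInf { E : ℝ | ∃ p : X → ℝ, (∀ y, 0 ≤ p y) ∧ (∑ y, p y = 1) ∧
        (∃ π : X → X → ℝ, (∀ x y, 0 ≤ π x y) ∧
          (∀ x, ∑ y, π x y = phat x) ∧ (∀ y, ∑ x, π x y = p y) ∧
          (∑ x, ∑ y, ‖ι x - ι y‖ ^ q * π x y) ≤ ε ^ q) ∧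
        E = ∑ y, p y * f y } =
      sSup { g : ℝ | ∃ l : ℝ, 0 ≤ l ∧
        g = (∑ x, phat x *
              (-(univ.sup' univ_nonempty fun y => -f y - l * ‖ι x - ι y‖ ^ q))) -
            ε ^ q * l } := by
  have hC0 : ∀ x, ‖ι x - ι x‖ ^ q = 0 := fun x => by simp [zero_pow (by omega : q ≠ 0)]
  rw [setOf_coupling_eq_primalValues (C := fun x y => ‖ι x - ι y‖ ^ q) hphat1]
  exact (isGreatest_dualObjective hC0 (fun _ _ => by positivity) hphat hphat1
    (pow_pos hε q)).csSup_eq.symm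

/-- Strong duality for Wasserstein distributionally robust optimization on a finite
subset of `ℝ^d`: the worst-case expectation over the `q`-Wasserstein ball of radius
`ε` around `P̂` equals `sup_{λ ≥ 0} ( E_{P̂}[-(-f)^{λc}] - ε^q λ )` with
`c(x,y) = ‖x - y‖^q`. -/
theorem wasserstein_strong_duality
    {X : Type*} [Fintype X] [Nonempty X] {d : ℕ}
    (ι : X → EuclideanSpace ℝ (Fin d)) (hι : Function.Injective ι)
    (f : X → ℝ) (ε : ℝ) (hε : 0 < ε) (q : ℕ) (hq : 1 ≤ q)
    (phat : X → ℝ) (hphat : ∀ x, 0 ≤ phat x) (hphat1 : ∑ x, phat x = 1) :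
    sInf { E : ℝ | ∃ p : X → ℝ, (∀ y, 0 ≤ p y) ∧ (∑ y, p y = 1) ∧
        (∃ π : X → X → ℝ, (∀ x y, 0 ≤ π x y) ∧
          (∀ x, ∑ y, π x y = phat x) ∧ (∀ y, ∑ x, π x y = p y) ∧
          (∑ x, ∑ y, ‖ι x - ι y‖ ^ q * π x y) ≤ ε ^ q) ∧
        E = ∑ y, p y * f y } =
      sSup { g : ℝ | ∃ l : ℝ, 0 ≤ l ∧
        g = (∑ x, phat x *
              (-(univ.sup' univ_nonempty fun y => -f y - l * ‖ι x - ι y‖ ^ q))) -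
            ε ^ q * l } :=
  wasserstein_strong_duality_general ι f ε hε q hq phat hphat hphat1
end
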